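/- Let w = P_1…P_n be a coherent word of starters and terminators and 1 ≤ i ≤ n−1. If P_i and P_{i+1} are both starters or both terminators, then τ_i(w) ~ w. -/

import Mathlib

set_option maxHeartbeats 1000000

universe u v w

/-- An ipomset over event universe `E` and alphabet `A`:
a finite set of events with a precedence order `lt`, an event order `evord`,
source and target sets, and a labeling. -/
structure Ipomset (E : Type u) (A : Type v) where
  events : Finset E
  lt : E → E → Prop
  evord : E → E → Prop
  src : Finset E
  tgt : Finset E
  lab : E → A
  lt_mem : ∀ {x y}, lt x y → x ∈ events ∧ y ∈ events
  evord_mem : ∀ {x y}, evord x y → x ∈ events ∧ y ∈ events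
  lt_irrefl : ∀ x, ¬ lt x x
  lt_trans : ∀ {x y z}, lt x y → lt y z → lt x z
  evord_irrefl : ∀ x, ¬ evord x x
  evord_trans : ∀ {x y z}, evord x y → evord y z → evord x z
  order_total : ∀ {x y}, x ∈ events → y ∈ events → x ≠ y →
      lt x y ∨ lt y x ∨ evord x y ∨ evord y x
  src_sub : src ⊆ events
  tgt_sub : tgt ⊆ events
  src_min : ∀ {x y}, x ∈ src → ¬ lt y x
  tgt_max : ∀ {x y}, x ∈ tgt → ¬ lt x y

namespace Ipomset

variable {E : Type u} {A : Type v}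

/-- An ipomset is interval if its precedence order admits an interval representation. -/
def Interval (P : Ipomset E A) : Prop :=
  ∃ b e : E → ℝ, (∀ x ∈ P.events, b x ≤ e x) ∧
    ∀ x ∈ P.events, ∀ y ∈ P.events, (P.lt x y ↔ e x < b y)

/-- Discrete: empty precedence order. -/
def Discrete (P : Ipomset E A) : Prop := ∀ x y, ¬ P.lt x y

/-- A starter is a discrete ipomset with `tgt = events`. -/
def Starter (P : Ipomset E A) : Prop := P.Discrete ∧ P.tgt = P.events

/-- A terminator is a discrete ipomset with `src = events`. -/
def Terminator (P : Ipomset E A) : Prop := P.Discrete ∧ P.src = P.events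

/-- An identity is a discrete ipomset with `src = tgt = events`. -/
def IsIdentity (P : Ipomset E A) : Prop :=
  P.Discrete ∧ P.src = P.events ∧ P.tgt = P.events

end Ipomset

/-- A conclist: a finite set with a strict total order (the event order) and labeling. -/
structure Conclist (E : Type u) (A : Type v) where
  events : Finset E
  evord : E → E → Prop
  lab : E → Option A
  evord_mem : ∀ {x y}, evord x y → x ∈ events ∧ y ∈ events
  evord_irrefl : ∀ x, ¬ evord x x
  evord_trans : ∀ {x y z}, evord x y → evord y z → evord x z
  evord_total : ∀ {x y}, x ∈ events → y ∈ events → x ≠ y → evord x y ∨ evord y x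

variable {E : Type u} {A : Type v}

/-- The source interface of an ipomset: the conclist on its source set. -/
def Ipomset.srcIface [DecidableEq E] (P : Ipomset E A) : Conclist E A where
  events := P.src
  evord x y := x ∈ P.src ∧ y ∈ P.src ∧ P.evord x y
  lab x := if x ∈ P.src then some (P.lab x) else none
  evord_mem h := ⟨h.1, h.2.1⟩
  evord_irrefl x h := P.evord_irrefl x h.2.2
  evord_trans h1 h2 := ⟨h1.1, h2.2.1, P.evord_trans h1.2.2 h2.2.2⟩
  evord_total {x y} hx hy hxy := by
    rcases P.order_total (P.src_sub hx) (P.src_sub hy) hxy with h | h | h | h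
    · exact absurd h (P.src_min hy)
    · exact absurd h (P.src_min hx)
    · exact Or.inl ⟨hx, hy, h⟩
    · exact Or.inr ⟨hy, hx, h⟩

/-- The target interface of an ipomset: the conclist on its target set. -/
def Ipomset.tgtIface [DecidableEq E] (P : Ipomset E A) : Conclist E A where
  events := P.tgt
  evord x y := x ∈ P.tgt ∧ y ∈ P.tgt ∧ P.evord x y
  lab x := if x ∈ P.tgt then some (P.lab x) else none
  evord_mem h := ⟨h.1, h.2.1⟩
  evord_irrefl x h := P.evord_irrefl x h.2.2
  evord_trans h1 h2 := ⟨h1.1, h2.2.1, P.evord_trans h1.2.2 h2.2.2⟩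
  evord_total {x y} hx hy hxy := by
    rcases P.order_total (P.tgt_sub hx) (P.tgt_sub hy) hxy with h | h | h | h
    · exact absurd h (P.tgt_max hx)
    · exact absurd h (P.tgt_max hy)
    · exact Or.inl ⟨hx, hy, h⟩
    · exact Or.inr ⟨hy, hx, h⟩

/-- `f` is an isomorphism of ipomsets from `P` to `Q`. -/
structure IsIpoIso (P Q : Ipomset E A) (f : E → E) : Prop where
  maps : ∀ x ∈ P.events, f x ∈ Q.events
  inj : ∀ x ∈ P.events, ∀ y ∈ P.events, f x = f y → x = y
  surj : ∀ y ∈ Q.events, ∃ x ∈ P.events, f x = y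
  src_iff : ∀ x ∈ P.events, (x ∈ P.src ↔ f x ∈ Q.src)
  tgt_iff : ∀ x ∈ P.events, (x ∈ P.tgt ↔ f x ∈ Q.tgt)
  lab_eq : ∀ x ∈ P.events, Q.lab (f x) = P.lab x
  lt_iff : ∀ x ∈ P.events, ∀ y ∈ P.events, (Q.lt (f x) (f y) ↔ P.lt x y)
  evord_iff : ∀ x ∈ P.events, ∀ y ∈ P.events, ¬ P.lt x y → ¬ P.lt y x →
      (P.evord x y ↔ Q.evord (f x) (f y))

/-- `P ≅ Q`: there is an isomorphism of ipomsets from `P` to `Q`. -/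
def IpoIso (P Q : Ipomset E A) : Prop := ∃ f, IsIpoIso P Q f

/-- `f` is a subsumption of ipomsets from `P` to `Q`. -/
structure IsSubsumption (P Q : Ipomset E A) (f : E → E) : Prop where
  maps : ∀ x ∈ P.events, f x ∈ Q.events
  inj : ∀ x ∈ P.events, ∀ y ∈ P.events, f x = f y → x = y
  surj : ∀ y ∈ Q.events, ∃ x ∈ P.events, f x = y
  src_iff : ∀ x ∈ P.events, (x ∈ P.src ↔ f x ∈ Q.src)
  tgt_iff : ∀ x ∈ P.events, (x ∈ P.tgt ↔ f x ∈ Q.tgt)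
  lab_eq : ∀ x ∈ P.events, Q.lab (f x) = P.lab x
  lt_imp : ∀ x ∈ P.events, ∀ y ∈ P.events, Q.lt (f x) (f y) → P.lt x y
  evord_imp : ∀ x ∈ P.events, ∀ y ∈ P.events, ¬ P.lt x y → ¬ P.lt y x →
      P.evord x y → Q.evord (f x) (f y)

/-- `P ⊑ Q`: there is a subsumption from `P` to `Q`. -/
def Subsumes (P Q : Ipomset E A) : Prop := ∃ f, IsSubsumption P Q f

/-- `P ⊏ Q`: `P ⊑ Q` and `P` and `Q` are not isomorphic. -/
def StrictSubsumes (P Q : Ipomset E A) : Prop := Subsumes P Q ∧ ¬ IpoIso P Q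

/-- `f` is an isomorphism of conclists from `U` to `V`. -/
structure IsClIso (U V : Conclist E A) (f : E → E) : Prop where
  maps : ∀ x ∈ U.events, f x ∈ V.events
  inj : ∀ x ∈ U.events, ∀ y ∈ U.events, f x = f y → x = y
  surj : ∀ y ∈ V.events, ∃ x ∈ U.events, f x = y
  lab_eq : ∀ x ∈ U.events, V.lab (f x) = U.lab x
  evord_iff : ∀ x ∈ U.events, ∀ y ∈ U.events, (U.evord x y ↔ V.evord (f x) (f y))

/-- `U ≅ V` for conclists. -/
def ClIso (U V : Conclist E A) : Prop := ∃ f, IsClIso U V f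

/-- `P` and `Q` are composable representatives: the target interface of `P` coincides
with the source interface of `Q` and is exactly the overlap of the event sets. -/
def Composable [DecidableEq E] (P Q : Ipomset E A) : Prop :=
  P.tgtIface = Q.srcIface ∧ P.events ∩ Q.events = P.tgt

/-- One step of the glued precedence order. -/
def glueStep (P Q : Ipomset E A) (x y : E) : Prop :=
  P.lt x y ∨ Q.lt x y ∨
    (x ∈ P.events ∧ x ∉ P.tgt ∧ y ∈ Q.events ∧ y ∉ Q.src)

/-- The glued precedence order: transitive closure. -/
def glueLt (P Q : Ipomset E A) : E → E → Prop :=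
  Relation.TransGen (glueStep P Q)

/-- The glued event order: the union of the two event orders. -/
def glueEvord (P Q : Ipomset E A) (x y : E) : Prop :=
  P.evord x y ∨ Q.evord x y

/-- `R` is the gluing of the composable representatives `P` and `Q`. -/
def IsGlueOf [DecidableEq E] (P Q R : Ipomset E A) : Prop :=
  Composable P Q ∧
  R.events = P.events ∪ Q.events ∧
  (∀ x y, R.lt x y ↔ glueLt P Q x y) ∧
  (∀ x y, R.evord x y ↔ glueEvord P Q x y) ∧
  R.src = P.src ∧ R.tgt = Q.tgt ∧
  (∀ x ∈ P.events, R.lab x = P.lab x) ∧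
  (∀ x ∈ Q.events, R.lab x = Q.lab x)

/-- `R ≅ P * Q`: up to isomorphism, `R` is the gluing of `P` and `Q`. -/
def IsGluing [DecidableEq E] (P Q R : Ipomset E A) : Prop :=
  ∃ P' Q' R', IpoIso P P' ∧ IpoIso Q Q' ∧ IpoIso R R' ∧ IsGlueOf P' Q' R'

/-- A letter of a step sequence: a starter or a terminator. -/
def StepLetter (P : Ipomset E A) : Prop := P.Starter ∨ P.Terminator

/-- A word of starters and terminators is coherent if consecutive interfaces match
(as isomorphism classes of conclists). -/
def Coherent [DecidableEq E] (w : List (Ipomset E A)) : Prop :=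
  (∀ P ∈ w, StepLetter P) ∧
  w.Chain' (fun P Q => ClIso P.tgtIface Q.srcIface)

/-- The congruence `~` on coherent words: generated by composing two subsequent
starters or two subsequent terminators, removing/inserting identities, and
replacing letters by isomorphic ones. -/
inductive StepEquiv {E : Type u} {A : Type v} [DecidableEq E] :
    List (Ipomset E A) → List (Ipomset E A) → Prop
  | glue (u v : List (Ipomset E A)) (P Q R : Ipomset E A) :
      Coherent (u ++ P :: Q :: v) →
      ((P.Starter ∧ Q.Starter) ∨ (P.Terminator ∧ Q.Terminator)) →
      IsGluing P Q R →
      StepEquiv (u ++ P :: Q :: v) (u ++ R :: v)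
  | ident (u v : List (Ipomset E A)) (P : Ipomset E A) :
      Coherent (u ++ P :: v) → P.IsIdentity → u ++ v ≠ [] →
      StepEquiv (u ++ P :: v) (u ++ v)
  | iso (u v : List (Ipomset E A)) (P Q : Ipomset E A) :
      Coherent (u ++ P :: v) → IpoIso P Q →
      StepEquiv (u ++ P :: v) (u ++ Q :: v)
  | refl (w : List (Ipomset E A)) : StepEquiv w w
  | symm {w₁ w₂ : List (Ipomset E A)} : StepEquiv w₁ w₂ → StepEquiv w₂ w₁
  | trans {w₁ w₂ w₃ : List (Ipomset E A)} :
      StepEquiv w₁ w₂ → StepEquiv w₂ w₃ → StepEquiv w₁ w₃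

/-- `R` is (up to isomorphism) the gluing `P₁ * ⋯ * Pₙ` of the word `w = P₁ ⋯ Pₙ`. -/
inductive GlueWord {E : Type u} {A : Type v} [DecidableEq E] :
    List (Ipomset E A) → Ipomset E A → Prop
  | single (P : Ipomset E A) : GlueWord [P] P
  | cons (P : Ipomset E A) (w : List (Ipomset E A)) (R S : Ipomset E A) :
      GlueWord w R → IsGluing P R S → GlueWord (P :: w) S

/-- The discrete ipomset on sub-conclist `V` of the discrete ipomset `W`,
with sources `S` and targets `T`. -/
def letterOf [DecidableEq E] (W : Ipomset E A) (hW : W.Discrete)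
    (V S T : Finset E) : Ipomset E A where
  events := V ∩ W.events
  lt _ _ := False
  evord x y := x ∈ V ∩ W.events ∧ y ∈ V ∩ W.events ∧ W.evord x y
  src := S ∩ (V ∩ W.events)
  tgt := T ∩ (V ∩ W.events)
  lab := W.lab
  lt_mem h := h.elim
  evord_mem h := ⟨h.1, h.2.1⟩
  lt_irrefl _ h := h
  lt_trans h := h.elim
  evord_irrefl x h := W.evord_irrefl x h.2.2
  evord_trans h1 h2 := ⟨h1.1, h2.2.1, W.evord_trans h1.2.2 h2.2.2⟩
  order_total {x y} hx hy hxy := by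
    rcases W.order_total (Finset.mem_inter.mp hx).2 (Finset.mem_inter.mp hy).2 hxy
      with h | h | h | h
    · exact absurd h (hW _ _)
    · exact absurd h (hW _ _)
    · exact Or.inr (Or.inr (Or.inl ⟨hx, hy, h⟩))
    · exact Or.inr (Or.inr (Or.inr ⟨hy, hx, h⟩))
  src_sub := Finset.inter_subset_right
  tgt_sub := Finset.inter_subset_right
  src_min _ h := h
  tgt_max _ h := h

/-- `V↑B`: the starter on the conclist `V` (inside `W`) starting the events of `B`. -/
def upOn [DecidableEq E] (W : Ipomset E A) (hW : W.Discrete) (V B : Finset E) :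
    Ipomset E A :=
  letterOf W hW V (V \ B) V

/-- `V↓B`: the terminator on the conclist `V` (inside `W`) terminating the events of `B`. -/
def downOn [DecidableEq E] (W : Ipomset E A) (hW : W.Discrete) (V B : Finset E) :
    Ipomset E A :=
  letterOf W hW V V (V \ B)

/-- The transposition relation: `TranspAt w w'` holds iff `w' = τᵢ(w)` for some `i`. -/
inductive TranspAt {E : Type u} {A : Type v} [DecidableEq E] :
    List (Ipomset E A) → List (Ipomset E A) → Prop
  | ss (u v : List (Ipomset E A)) (W : Ipomset E A) (hW : W.Discrete)
      (Aa Bb : Finset E) (hA : Aa ⊆ W.events) (hB : Bb ⊆ W.events)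
      (hd : Disjoint Aa Bb) :
      TranspAt (u ++ upOn W hW (W.events \ Bb) Aa :: upOn W hW W.events Bb :: v)
               (u ++ upOn W hW (W.events \ Aa) Bb :: upOn W hW W.events Aa :: v)
  | tt (u v : List (Ipomset E A)) (W : Ipomset E A) (hW : W.Discrete)
      (Aa Bb : Finset E) (hA : Aa ⊆ W.events) (hB : Bb ⊆ W.events)
      (hd : Disjoint Aa Bb) :
      TranspAt (u ++ downOn W hW W.events Aa :: downOn W hW (W.events \ Aa) Bb :: v)
               (u ++ downOn W hW W.events Bb :: downOn W hW (W.events \ Bb) Aa :: v)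
  | st (u v : List (Ipomset E A)) (W : Ipomset E A) (hW : W.Discrete)
      (Aa Bb : Finset E) (hA : Aa ⊆ W.events) (hB : Bb ⊆ W.events)
      (hd : Disjoint Aa Bb) :
      TranspAt (u ++ upOn W hW W.events Aa :: downOn W hW W.events Bb :: v)
               (u ++ downOn W hW (W.events \ Aa) Bb :: upOn W hW (W.events \ Bb) Aa :: v)
  | ts (u v : List (Ipomset E A)) (W : Ipomset E A) (hW : W.Discrete)
      (Aa Bb : Finset E) (hA : Aa ⊆ W.events) (hB : Bb ⊆ W.events)
      (hd : Disjoint Aa Bb) :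
      TranspAt (u ++ downOn W hW (W.events \ Bb) Aa :: upOn W hW (W.events \ Aa) Bb :: v)
               (u ++ upOn W hW W.events Bb :: downOn W hW W.events Aa :: v)

/-- A word is dense if every letter starts or terminates exactly one event. -/
def DenseWord [DecidableEq E] (w : List (Ipomset E A)) : Prop :=
  ∀ P ∈ w, (P.Starter ∧ (P.events \ P.src).card = 1) ∨
    (P.Terminator ∧ (P.events \ P.tgt).card = 1)

/-- There is a chain of transpositions from `w₁` to `w₂` through dense coherent words
all satisfying `pred`. -/
def TranspChain [DecidableEq E] (pred : List (Ipomset E A) → Prop)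
    (w₁ w₂ : List (Ipomset E A)) : Prop :=
  ∃ us : List (List (Ipomset E A)),
    us.head? = some w₁ ∧ us.getLast? = some w₂ ∧
    us.Chain' TranspAt ∧ ∀ u ∈ us, DenseWord u ∧ Coherent u ∧ pred u

/-- A word is sparse if it is a single identity, or its letters are non-identity
starters and terminators which strictly alternate. -/
def SparseWord [DecidableEq E] (w : List (Ipomset E A)) : Prop :=
  (∃ P, w = [P] ∧ P.IsIdentity) ∨
  ((∀ P ∈ w, StepLetter P ∧ ¬ P.IsIdentity) ∧
    w.Chain' (fun P Q => (P.Starter ∧ Q.Terminator) ∨ (P.Terminator ∧ Q.Starter)))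

/-- `w` is THE sparse step decomposition of `P` (up to the chosen representatives). -/
def SparseDecomp [DecidableEq E] (P : Ipomset E A) (w : List (Ipomset E A)) : Prop :=
  SparseWord w ∧ Coherent w ∧ ∃ R, GlueWord w R ∧ IpoIso R P

/-- The transposition exchanging a starter followed by a terminator
(third case of the definition of transpositions): `TranspST w tw` iff `tw = τᵢ(w)`
where the `i`-th factor of `w` is `U↑A · U↓B`. -/
def TranspST [DecidableEq E] (w tw : List (Ipomset E A)) : Prop :=
  ∃ (u v : List (Ipomset E A)) (W : Ipomset E A) (hW : W.Discrete)
    (Aa Bb : Finset E), Aa ⊆ W.events ∧ Bb ⊆ W.events ∧ Disjoint Aa Bb ∧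
    w = u ++ upOn W hW W.events Aa :: downOn W hW W.events Bb :: v ∧
    tw = u ++ downOn W hW (W.events \ Aa) Bb :: upOn W hW (W.events \ Bb) Aa :: v

/-- `w₂ <ₑ w₁` on step sequences: some representative of `w₂` is obtained from a
representative of `w₁` by a starter-terminator transposition. -/
def LtE [DecidableEq E] (w₂ w₁ : List (Ipomset E A)) : Prop :=
  ∃ w₁' w₂', StepEquiv w₁ w₁' ∧ StepEquiv w₂ w₂' ∧ TranspST w₁' w₂'

/-- `≤`: the reflexive-transitive closure of `<ₑ` on step sequences. -/
def StepLe [DecidableEq E] (w₁ w₂ : List (Ipomset E A)) : Prop :=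
  Relation.ReflTransGen (fun x y => LtE x y ∨ StepEquiv x y) w₁ w₂

/-- A higher-dimensional automaton: cells labelled by conclists (identity ipomsets),
face maps satisfying the precubical identities, start and accept cells. -/
structure HDA (X : Type w) (E : Type u) (A : Type v) [DecidableEq E] where
  ev : X → Ipomset E A
  ev_id : ∀ q, (ev q).IsIdentity
  face : Bool → Finset E → X → X
  face_ev : ∀ (b : Bool) (B : Finset E) (q : X), B ⊆ (ev q).events →
    ev (face b B q) =
      letterOf (ev q) (ev_id q).1 ((ev q).events \ B) ((ev q).events \ B)
        ((ev q).events \ B)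
  face_comm : ∀ (b c : Bool) (B C : Finset E) (q : X), Disjoint B C →
    B ⊆ (ev q).events → C ⊆ (ev q).events →
    face b B (face c C q) = face c C (face b B q)
  start : Set X
  accept : Set X

/-- Paths in an HDA, together with their event words (interleaving identities). -/
inductive HPath {X : Type w} {E : Type u} {A : Type v} [DecidableEq E]
    (H : HDA X E A) : X → X → List (Ipomset E A) → Prop
  | nil (q : X) : HPath H q q [H.ev q]
  | up (q p r : X) (w : List (Ipomset E A)) (B : Finset E)
      (hB : B ⊆ (H.ev p).events) :
      q = H.face false B p → HPath H p r w →
      HPath H q r (upOn (H.ev p) (H.ev_id p).1 (H.ev p).events B :: w)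
  | down (p q r : X) (w : List (Ipomset E A)) (B : Finset E)
      (hB : B ⊆ (H.ev p).events) :
      q = H.face true B p → HPath H q r w →
      HPath H p r (downOn (H.ev p) (H.ev_id p).1 (H.ev p).events B :: w)

/-- The language of an HDA: event ipomsets of accepting paths, closed under iso. -/
def HLang {X : Type w} [DecidableEq E] (H : HDA X E A) : Set (Ipomset E A) :=
  {P | ∃ q r w R, q ∈ H.start ∧ r ∈ H.accept ∧ HPath H q r w ∧
    GlueWord w R ∧ IpoIso R P}

/-- An ST-automaton: states labelled by conclists (identity ipomsets), edges labelled
by starters and terminators consistently with the state labels. -/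
structure STAut (Q : Type w) (E : Type u) (A : Type v) [DecidableEq E] where
  lab : Q → Ipomset E A
  lab_id : ∀ q, (lab q).IsIdentity
  edge : Q → Ipomset E A → Q → Prop
  edge_st : ∀ {q P r}, edge q P r → StepLetter P
  edge_src : ∀ {q P r}, edge q P r → P.srcIface = (lab q).srcIface
  edge_tgt : ∀ {q P r}, edge q P r → P.tgtIface = (lab r).srcIface
  start : Set Q
  accept : Set Q

/-- Paths in an ST-automaton together with their labels
`id_{λ(q₀)} P₁ id_{λ(q₁)} ⋯ Pₙ id_{λ(qₙ)}`. -/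
inductive STPath {Q : Type w} {E : Type u} {A : Type v} [DecidableEq E]
    (S : STAut Q E A) : Q → Q → List (Ipomset E A) → Prop
  | nil (q : Q) : STPath S q q [S.lab q]
  | cons (q p r : Q) (P : Ipomset E A) (w : List (Ipomset E A)) :
      S.edge q P p → STPath S p r w → STPath S q r (S.lab q :: P :: w)

/-- The language of an ST-automaton: the `~`-classes of labels of accepting paths
(as a `~`-saturated set of words). -/
def STLang {Q : Type w} [DecidableEq E] (S : STAut Q E A) :
    Set (List (Ipomset E A)) :=
  {w | ∃ q r w', q ∈ S.start ∧ r ∈ S.accept ∧ STPath S q r w' ∧ StepEquiv w w'}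

/-- `S` is the ST-automaton `ST(X)` associated to the HDA `H`. -/
def IsSTof {X : Type w} [DecidableEq E] (H : HDA X E A) (S : STAut X E A) : Prop :=
  S.lab = H.ev ∧ S.start = H.start ∧ S.accept = H.accept ∧
  ∀ q P r, S.edge q P r ↔
    ((∃ B, ∃ _ : B ⊆ (H.ev r).events, q = H.face false B r ∧
        P = upOn (H.ev r) (H.ev_id r).1 (H.ev r).events B) ∨
     (∃ B, ∃ _ : B ⊆ (H.ev q).events, r = H.face true B q ∧
        P = downOn (H.ev q) (H.ev_id q).1 (H.ev q).events B))

/-- The image of a set of ipomsets under `Φ` (sparse step decomposition),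
as a `~`-saturated set of words. -/
def PhiImage [DecidableEq E] (L : Set (Ipomset E A)) : Set (List (Ipomset E A)) :=
  {w | ∃ P ∈ L, ∃ w', SparseDecomp P w' ∧ StepEquiv w w'}

/-- The image of a set of words under `Ψ` (gluing), as an iso-saturated set of ipomsets. -/
def PsiImage [DecidableEq E] (L : Set (List (Ipomset E A))) : Set (Ipomset E A) :=
  {P | ∃ w ∈ L, ∃ R, GlueWord w R ∧ IpoIso R P}

/-- `H` together with `ι` realizes the HDA `HD(S)` obtained from the ST-automaton `S`:
cells of `S` embed via `ι` compatibly with labels, start/accept cells, and each edge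
of `S` is realized by a face map of `H`. -/
def SimulatesST {Q : Type w} {X : Type w} [DecidableEq E]
    (S : STAut Q E A) (H : HDA X E A) (ι : Q → X) : Prop :=
  (∀ q, H.ev (ι q) = S.lab q) ∧
  (∀ q ∈ S.start, ι q ∈ H.start) ∧
  (∀ q ∈ S.accept, ι q ∈ H.accept) ∧
  ∀ q P r, S.edge q P r →
    ((∃ B, ∃ _ : B ⊆ (H.ev (ι r)).events, ι q = H.face false B (ι r) ∧
        P = upOn (H.ev (ι r)) (H.ev_id (ι r)).1 (H.ev (ι r)).events B) ∨
     (∃ B, ∃ _ : B ⊆ (H.ev (ι q)).events, ι r = H.face true B (ι q) ∧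
        P = downOn (H.ev (ι q)) (H.ev_id (ι q)).1 (H.ev (ι q)).events B))

/-! Both sides glue to a single letter: `(V∖B)↑A * V↑B` and `(V∖A)↑B * V↑A` are both `V↑(A ∪ B)`,
and dually `V↓A * (V∖A)↓B = V↓(A ∪ B)`. Gluing two starters (or two terminators) creates no
precedence, since no event of the first letter is terminated (resp. none of the second is
started), so the glued ipomset is again a discrete letter on `V`. The swapped word is still
coherent: its outer interfaces are those of the original pair, and its middle interface is
`V∖A` (resp. `V∖B`) on both sides. -/

theorem List.IsChain.replace_pair {α : Type*} {R : α → α → Prop} {l₁ l₂ : List α}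
    {b c b' c' : α} (h : (l₁ ++ b :: c :: l₂).IsChain R) (hb : ∀ a, R a b → R a b')
    (hbc : R b' c') (hc : ∀ d, R c d → R c' d) : (l₁ ++ b' :: c' :: l₂).IsChain R := by
  grind [List.isChain_append, List.isChain_cons]

attribute [ext] Conclist

section Ipomsets

variable {E : Type u} {A : Type v}

theorem IpoIso.refl (P : Ipomset E A) : IpoIso P P :=
  ⟨id, fun _ h => h, fun _ _ _ _ h => h, fun y hy => ⟨y, hy, rfl⟩,
    fun _ _ => Iff.rfl, fun _ _ => Iff.rfl, fun _ _ => rfl,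
    fun _ _ _ _ => Iff.rfl, fun _ _ _ _ _ _ => Iff.rfl⟩

theorem ClIso.of_eq {U V : Conclist E A} (h : U = V) : ClIso U V :=
  h ▸ ⟨id, fun _ h => h, fun _ _ _ _ h => h, fun y hy => ⟨y, hy, rfl⟩,
    fun _ _ => rfl, fun _ _ _ _ => Iff.rfl⟩

theorem not_glueLt_of_discrete {P Q : Ipomset E A} (hP : P.Discrete) (hQ : Q.Discrete)
    (h : P.tgt = P.events ∨ Q.src = Q.events) (x y : E) : ¬ glueLt P Q x y := by
  intro hxy
  obtain ⟨z, hxz, -⟩ := Relation.TransGen.head'_iff.mp hxy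
  rcases hxz with hxz | hxz | ⟨hx, hxt, hz, hzs⟩
  · exact hP _ _ hxz
  · exact hQ _ _ hxz
  · rcases h with h | h
    · exact hxt (h ▸ hx)
    · exact hzs (h ▸ hz)

variable [DecidableEq E]

theorem IsGlueOf.isGluing {P Q R : Ipomset E A} (h : IsGlueOf P Q R) : IsGluing P Q R :=
  ⟨P, Q, R, IpoIso.refl P, IpoIso.refl Q, IpoIso.refl R, h⟩

theorem Coherent.replace_pair {u v : List (Ipomset E A)} {P Q P' Q' : Ipomset E A}
    (h : Coherent (u ++ P :: Q :: v)) (hP' : StepLetter P') (hQ' : StepLetter Q')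
    (hsrc : P'.srcIface = P.srcIface) (htgt : Q'.tgtIface = Q.tgtIface)
    (hmid : ClIso P'.tgtIface Q'.srcIface) : Coherent (u ++ P' :: Q' :: v) := by
  refine ⟨fun X hX => ?_, h.2.replace_pair (fun _ => hsrc ▸ id) hmid (fun _ => htgt ▸ id)⟩
  simp only [List.mem_append, List.mem_cons] at hX
  rcases hX with hX | rfl | rfl | hX
  · exact h.1 X (by simp [hX])
  · exact hP'
  · exact hQ'
  · exact h.1 X (by simp [hX])

def Ipomset.conclistOn (W : Ipomset E A) (hW : W.Discrete) (X : Finset E)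
    (hX : X ⊆ W.events) : Conclist E A where
  events := X
  evord x y := x ∈ X ∧ y ∈ X ∧ W.evord x y
  lab x := if x ∈ X then some (W.lab x) else none
  evord_mem h := ⟨h.1, h.2.1⟩
  evord_irrefl x h := W.evord_irrefl x h.2.2
  evord_trans h1 h2 := ⟨h1.1, h2.2.1, W.evord_trans h1.2.2 h2.2.2⟩
  evord_total {x y} hx hy hxy := by
    rcases W.order_total (hX hx) (hX hy) hxy with h | h | h | h
    · exact absurd h (hW _ _)
    · exact absurd h (hW _ _)
    · exact Or.inl ⟨hx, hy, h⟩
    · exact Or.inr ⟨hy, hx, h⟩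

end Ipomsets

section Letters

variable {E : Type u} {A : Type v} [DecidableEq E] (W : Ipomset E A) (hW : W.Discrete)

theorem letterOf_srcIface (V S T : Finset E) :
    (letterOf W hW V S T).srcIface =
      W.conclistOn hW (S ∩ (V ∩ W.events))
        (fun _ hx => (Finset.mem_inter.1 (Finset.mem_inter.1 hx).2).2) := by
  ext x y
  · rfl
  · simp only [Ipomset.srcIface, Ipomset.conclistOn, letterOf]
    grind
  · rfl

theorem letterOf_tgtIface (V S T : Finset E) :
    (letterOf W hW V S T).tgtIface =
      W.conclistOn hW (T ∩ (V ∩ W.events))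
        (fun _ hx => (Finset.mem_inter.1 (Finset.mem_inter.1 hx).2).2) := by
  ext x y
  · rfl
  · simp only [Ipomset.tgtIface, Ipomset.conclistOn, letterOf]
    grind
  · rfl

theorem upOn_starter (V B : Finset E) : (upOn W hW V B).Starter :=
  ⟨fun _ _ h => h, by simp [upOn, letterOf]⟩

theorem downOn_terminator (V B : Finset E) : (downOn W hW V B).Terminator :=
  ⟨fun _ _ h => h, by simp [downOn, letterOf]⟩

theorem isGlueOf_upOn (V A B : Finset E) :
    IsGlueOf (upOn W hW (V \ B) A) (upOn W hW V B) (upOn W hW V (A ∪ B)) := by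
  refine ⟨⟨?_, ?_⟩, ?_, fun x y => ?_, fun x y => ?_, ?_, ?_, fun _ _ => rfl, fun _ _ => rfl⟩
  · simp only [upOn, letterOf_tgtIface, letterOf_srcIface]
    congr 1
    ext; simp; tauto
  · ext; simp [upOn, letterOf]; tauto
  · ext; simp [upOn, letterOf]; tauto
  · exact iff_of_false id (not_glueLt_of_discrete (upOn_starter W hW _ _).1
      (upOn_starter W hW _ _).1 (.inl (upOn_starter W hW _ _).2) x y)
  · simp [upOn, letterOf, glueEvord]; tauto
  · ext; simp [upOn, letterOf]; tauto
  · ext; simp [upOn, letterOf]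

theorem isGlueOf_downOn (V A B : Finset E) :
    IsGlueOf (downOn W hW V A) (downOn W hW (V \ A) B) (downOn W hW V (A ∪ B)) := by
  refine ⟨⟨?_, ?_⟩, ?_, fun x y => ?_, fun x y => ?_, ?_, ?_, fun _ _ => rfl, fun _ _ => rfl⟩
  · simp only [downOn, letterOf_tgtIface, letterOf_srcIface]
    congr 1
    ext; simp; tauto
  · ext; simp [downOn, letterOf]; tauto
  · ext; simp [downOn, letterOf]; tauto
  · exact iff_of_false id (not_glueLt_of_discrete (downOn_terminator W hW _ _).1
      (downOn_terminator W hW _ _).1 (.inr (downOn_terminator W hW _ _).2) x y)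
  · simp [downOn, letterOf, glueEvord]; tauto
  · ext; simp [downOn, letterOf]
  · ext; simp [downOn, letterOf]; tauto

variable (u v : List (Ipomset E A)) (V A B : Finset E)

theorem stepEquiv_glue_upOn (h : Coherent (u ++ upOn W hW (V \ B) A :: upOn W hW V B :: v)) :
    StepEquiv (u ++ upOn W hW (V \ B) A :: upOn W hW V B :: v)
      (u ++ upOn W hW V (A ∪ B) :: v) :=
  .glue u v _ _ _ h (.inl ⟨upOn_starter W hW _ _, upOn_starter W hW _ _⟩)
    (isGlueOf_upOn W hW V A B).isGluing

theorem stepEquiv_glue_downOn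
    (h : Coherent (u ++ downOn W hW V A :: downOn W hW (V \ A) B :: v)) :
    StepEquiv (u ++ downOn W hW V A :: downOn W hW (V \ A) B :: v)
      (u ++ downOn W hW V (A ∪ B) :: v) :=
  .glue u v _ _ _ h (.inr ⟨downOn_terminator W hW _ _, downOn_terminator W hW _ _⟩)
    (isGlueOf_downOn W hW V A B).isGluing

theorem Coherent.upOn_swap (h : Coherent (u ++ upOn W hW (V \ B) A :: upOn W hW V B :: v)) :
    Coherent (u ++ upOn W hW (V \ A) B :: upOn W hW V A :: v) := by
  refine h.replace_pair (.inl (upOn_starter W hW _ _)) (.inl (upOn_starter W hW _ _)) ?_ rfl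
    (ClIso.of_eq (isGlueOf_upOn W hW V B A).1.1)
  simp only [upOn, letterOf_srcIface]
  congr 1
  ext; simp; tauto

theorem Coherent.downOn_swap
    (h : Coherent (u ++ downOn W hW V A :: downOn W hW (V \ A) B :: v)) :
    Coherent (u ++ downOn W hW V B :: downOn W hW (V \ B) A :: v) := by
  refine h.replace_pair (.inr (downOn_terminator W hW _ _)) (.inr (downOn_terminator W hW _ _))
    rfl ?_ (ClIso.of_eq (isGlueOf_downOn W hW V B A).1.1)
  simp only [downOn, letterOf_tgtIface]
  congr 1
  ext; simp; tauto

theorem stepEquiv_upOn_swap (h : Coherent (u ++ upOn W hW (V \ B) A :: upOn W hW V B :: v)) :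
    StepEquiv (u ++ upOn W hW (V \ A) B :: upOn W hW V A :: v)
      (u ++ upOn W hW (V \ B) A :: upOn W hW V B :: v) := by
  have hswap := stepEquiv_glue_upOn W hW u v V B A (h.upOn_swap W hW u v V A B)
  rw [Finset.union_comm] at hswap
  exact hswap.trans (stepEquiv_glue_upOn W hW u v V A B h).symm

theorem stepEquiv_downOn_swap
    (h : Coherent (u ++ downOn W hW V A :: downOn W hW (V \ A) B :: v)) :
    StepEquiv (u ++ downOn W hW V B :: downOn W hW (V \ B) A :: v)
      (u ++ downOn W hW V A :: downOn W hW (V \ A) B :: v) := by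
  have hswap := stepEquiv_glue_downOn W hW u v V B A (h.downOn_swap W hW u v V A B)
  rw [Finset.union_comm] at hswap
  exact hswap.trans (stepEquiv_glue_downOn W hW u v V A B h).symm

end Letters

theorem transposition_equiv_general [DecidableEq E]
    (u v : List (Ipomset E A)) (W : Ipomset E A) (hW : W.Discrete)
    (Aa Bb : Finset E) :
    (Coherent (u ++ upOn W hW (W.events \ Bb) Aa :: upOn W hW W.events Bb :: v) →
      StepEquiv
        (u ++ upOn W hW (W.events \ Aa) Bb :: upOn W hW W.events Aa :: v)
        (u ++ upOn W hW (W.events \ Bb) Aa :: upOn W hW W.events Bb :: v)) ∧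
    (Coherent (u ++ downOn W hW W.events Aa :: downOn W hW (W.events \ Aa) Bb :: v) →
      StepEquiv
        (u ++ downOn W hW W.events Bb :: downOn W hW (W.events \ Bb) Aa :: v)
        (u ++ downOn W hW W.events Aa :: downOn W hW (W.events \ Aa) Bb :: v)) :=
  ⟨stepEquiv_upOn_swap W hW u v W.events Aa Bb, stepEquiv_downOn_swap W hW u v W.events Aa Bb⟩

/-- If `Pᵢ` and `Pᵢ₊₁` are both starters or both terminators in a
coherent word `w`, then `τᵢ(w) ~ w`. -/
theorem transposition_equiv [DecidableEq E]
    (u v : List (Ipomset E A)) (W : Ipomset E A) (hW : W.Discrete)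
    (Aa Bb : Finset E) (hA : Aa ⊆ W.events) (hB : Bb ⊆ W.events)
    (hd : Disjoint Aa Bb) :
    (Coherent (u ++ upOn W hW (W.events \ Bb) Aa :: upOn W hW W.events Bb :: v) →
      StepEquiv
        (u ++ upOn W hW (W.events \ Aa) Bb :: upOn W hW W.events Aa :: v)
        (u ++ upOn W hW (W.events \ Bb) Aa :: upOn W hW W.events Bb :: v)) ∧
    (Coherent (u ++ downOn W hW W.events Aa :: downOn W hW (W.events \ Aa) Bb :: v) →
      StepEquiv
        (u ++ downOn W hW W.events Bb :: downOn W hW (W.events \ Bb) Aa :: v)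
        (u ++ downOn W hW W.events Aa :: downOn W hW (W.events \ Aa) Bb :: v)) :=
  transposition_equiv_general u v W hW Aa Bb
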